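/- For every 0 ≤ ε ≤ 1, Δ(ε) = inf{ g/n : n and g are integers with n ≥ g ≥ 1 and R(g,n) ≥ n·ε }. -/

import Mathlib

open MeasureTheory

/-- A set `C ⊆ ℝ` is symmetric if it is invariant under some reflection `x ↦ 2c − x`. -/
def IsSymmetricSet (C : Set ℝ) : Prop :=
  ∃ c : ℝ, ∀ x : ℝ, x ∈ C ↔ 2 * c - x ∈ C

/-- `symD A` is the supremum of measures of symmetric measurable subsets of `A`. -/
noncomputable def symD (A : Set ℝ) : ℝ :=
  sSup {m : ℝ | ∃ C : Set ℝ, C ⊆ A ∧ MeasurableSet C ∧ IsSymmetricSet C ∧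
    m = (volume C).toReal}

/-- `Delta ε` is the infimum of `symD A` over measurable `A ⊆ [0,1)` with `λ(A) = ε`. -/
noncomputable def Delta (ε : ℝ) : ℝ :=
  sInf {d : ℝ | ∃ A : Set ℝ, A ⊆ Set.Ico (0:ℝ) 1 ∧ MeasurableSet A ∧
    volume A = ENNReal.ofReal ε ∧ d = symD A}


/-- A finite set `S` of integers is a `B*[g]` set if every integer `m` has at most `g`
representations as an ordered sum `s₁ + s₂` with `s₁, s₂ ∈ S`. -/
def IsBstar (g : ℕ) (S : Finset ℤ) : Prop :=
  ∀ m : ℤ, ((S ×ˢ S).filter (fun p => p.1 + p.2 = m)).card ≤ g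

/-- `R g n` is the maximal size of a `B*[g]` set contained in `{1, …, n}`. -/
noncomputable def R (g n : ℕ) : ℕ :=
  sSup {k : ℕ | ∃ S : Finset ℤ, S ⊆ Finset.Icc 1 (n : ℤ) ∧ IsBstar g S ∧ S.card = k}


/-!
A `B*[g]` set `S ⊆ {1, …, n}` becomes a set `A ⊆ [0, 1)` by replacing each `s ∈ S` with the
grid cell `[(s-1)/n, s/n)`. A set symmetric about `c` inside `A` is covered by the overlaps of
cells with reflected cells; the overlap of cells `s` and `t` has a measure that only depends on
`s + t`, and for a fixed sum these measures add up to at most `1/n`, so each of the at most `g`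
pairs with a given sum contributes at most that much: `D(A) ≤ g/n`. Cutting `A` down to measure
`ε` only lowers `D`.

Conversely, approximate `A` by a union of grid cells of a fine grid. For each sum `m`, the open
cells of the pairs `(s, m - s)` form a set symmetric about `(m-1)/(2n)`, and almost all of it
lies in `A`; so the grid set is `B*[g]` with `g ≈ n D(A)`. It may be slightly too small, and
adding the missing `≈ n (ε - |S|/n)` elements raises `g` by at most twice their number.
-/

open Set Function Filter

section Bstar

lemma card_filter_add_eq_le_left (s t : Finset ℤ) (m : ℤ) :
    ((s ×ˢ t).filter (fun p => p.1 + p.2 = m)).card ≤ s.card := by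
  refine Finset.card_le_card_of_injOn Prod.fst (fun p hp => ?_) fun p hp q hq h => ?_
  · exact (Finset.mem_product.1 (Finset.mem_filter.1 hp).1).1
  · simp only [Finset.mem_coe, Finset.mem_filter] at hp hq
    exact Prod.ext h (by omega)

lemma card_filter_add_eq_le_right (s t : Finset ℤ) (m : ℤ) :
    ((s ×ˢ t).filter (fun p => p.1 + p.2 = m)).card ≤ t.card := by
  refine Finset.card_le_card_of_injOn Prod.snd (fun p hp => ?_) fun p hp q hq h => ?_
  · exact (Finset.mem_product.1 (Finset.mem_filter.1 hp).1).2
  · simp only [Finset.mem_coe, Finset.mem_filter] at hp hq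
    exact Prod.ext (by omega) h

lemma isBstar_of_card_le {g : ℕ} {S : Finset ℤ} (h : S.card ≤ g) : IsBstar g S :=
  fun m => (card_filter_add_eq_le_left S S m).trans h

lemma IsBstar.union {g : ℕ} {S : Finset ℤ} (hS : IsBstar g S) (E : Finset ℤ) :
    IsBstar (g + 2 * E.card) (S ∪ E) := by
  intro m
  have hsub : ((S ∪ E) ×ˢ (S ∪ E)).filter (fun p => p.1 + p.2 = m) ⊆
      ((S ×ˢ S).filter (fun p => p.1 + p.2 = m) ∪
        (E ×ˢ (S ∪ E)).filter (fun p => p.1 + p.2 = m)) ∪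
        ((S ∪ E) ×ˢ E).filter (fun p => p.1 + p.2 = m) := by
    intro p
    simp only [Finset.mem_filter, Finset.mem_product, Finset.mem_union]
    tauto
  calc _ ≤ _ := Finset.card_le_card hsub
    _ ≤ _ := (Finset.card_union_le _ _).trans (add_le_add_left (Finset.card_union_le _ _) _)
    _ ≤ g + E.card + E.card := add_le_add (add_le_add (hS m)
          (card_filter_add_eq_le_left _ _ m)) (card_filter_add_eq_le_right _ _ m)
    _ = g + 2 * E.card := by ring

lemma card_le_of_subset_Icc {n : ℕ} {S : Finset ℤ} (hS : S ⊆ Finset.Icc 1 (n : ℤ)) :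
    S.card ≤ n := by
  simpa using Finset.card_le_card hS

lemma exists_isBstar_superset {g n k : ℕ} {S : Finset ℤ} (hS : S ⊆ Finset.Icc 1 (n : ℤ))
    (hB : IsBstar g S) (hk : k ≤ n) :
    ∃ T ⊆ Finset.Icc 1 (n : ℤ), k ≤ T.card ∧ IsBstar (g + 2 * (k - S.card)) T := by
  obtain ⟨T, hST, hTn, hT⟩ := Finset.exists_subsuperset_card_eq hS (le_max_right k S.card)
    (by simpa using max_le hk (card_le_of_subset_Icc hS))
  have hE : (T \ S).card = k - S.card := by
    rw [Finset.card_sdiff_of_subset hST, hT]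
    omega
  refine ⟨T, hTn, hT ▸ le_max_left _ _, ?_⟩
  simpa [hE, Finset.union_sdiff_of_subset hST] using hB.union (T \ S)

lemma IsBstar.min_of_subset_Icc {g n : ℕ} {S : Finset ℤ} (hB : IsBstar g S)
    (hS : S ⊆ Finset.Icc 1 (n : ℤ)) : IsBstar (min g n) S := by
  rcases min_choice g n with h | h <;> rw [h]
  exacts [hB, isBstar_of_card_le (card_le_of_subset_Icc hS)]

lemma bddAbove_card_isBstar (g n : ℕ) :
    BddAbove {k : ℕ | ∃ S : Finset ℤ, S ⊆ Finset.Icc 1 (n : ℤ) ∧ IsBstar g S ∧ S.card = k} :=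
  ⟨n, by rintro _ ⟨S, hS, -, rfl⟩; exact card_le_of_subset_Icc hS⟩

lemma card_le_R {g n : ℕ} {S : Finset ℤ} (hS : S ⊆ Finset.Icc 1 (n : ℤ)) (hB : IsBstar g S) :
    S.card ≤ R g n :=
  le_csSup (bddAbove_card_isBstar g n) ⟨S, hS, hB, rfl⟩

lemma exists_isBstar_card_eq_R (g n : ℕ) :
    ∃ S ⊆ Finset.Icc 1 (n : ℤ), IsBstar g S ∧ S.card = R g n := by
  refine Nat.sSup_mem ?_ (bddAbove_card_isBstar g n)
  exact ⟨0, ∅, by simp, isBstar_of_card_le (by simp), rfl⟩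

lemma le_R_self (n : ℕ) : n ≤ R n n := by
  simpa using card_le_R (subset_refl _) (isBstar_of_card_le (g := n) (S := Finset.Icc 1 (n : ℤ))
    (by simp))

end Bstar

section Symmetric

lemma isSymmetricSet_of_forall_sub_mem {C : Set ℝ} {a : ℝ} (h : ∀ x ∈ C, a - x ∈ C) :
    IsSymmetricSet C := by
  refine ⟨a / 2, fun x => ⟨fun hx => ?_, fun hx => ?_⟩⟩ <;> rw [mul_div_cancel₀ a two_ne_zero] at *
  · exact h x hx
  · simpa using h _ hx

lemma symD_nonneg (A : Set ℝ) : 0 ≤ symD A :=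
  Real.sSup_nonneg <| by rintro _ ⟨C, -, -, -, rfl⟩; exact ENNReal.toReal_nonneg

lemma symD_le {A : Set ℝ} {b : ℝ}
    (hb : ∀ C ⊆ A, MeasurableSet C → IsSymmetricSet C → (volume C).toReal ≤ b) : symD A ≤ b :=
  csSup_le ⟨0, ∅, empty_subset A, .empty, ⟨0, by simp⟩, by simp⟩
    (by rintro _ ⟨C, hCA, hCm, hCs, rfl⟩; exact hb C hCA hCm hCs)

lemma toReal_volume_le_symD {A C : Set ℝ} (hA : volume A ≠ ⊤) (hCA : C ⊆ A)
    (hCm : MeasurableSet C) (hCs : IsSymmetricSet C) : (volume C).toReal ≤ symD A :=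
  le_csSup ⟨(volume A).toReal, by
      rintro _ ⟨D, hDA, -, -, rfl⟩; exact ENNReal.toReal_mono hA (measure_mono hDA)⟩
    ⟨C, hCA, hCm, hCs, rfl⟩

/-- The points of `X ∩ A` whose mirror image also lies in `X ∩ A` form a symmetric subset of `A`;
what `X` loses in passing to it is covered by `X \ A` and its mirror image. -/
lemma volume_le_symD_add {A X : Set ℝ} (hA : volume A ≠ ⊤) (hAm : MeasurableSet A)
    (hXm : MeasurableSet X) {a : ℝ} (hX : ∀ x ∈ X, a - x ∈ X) :
    volume X ≤ ENNReal.ofReal (symD A) + 2 * volume (X \ A) := by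
  set ρ : ℝ → ℝ := fun x => a - x
  set Y := (X ∩ A) ∩ ρ ⁻¹' (X ∩ A)
  have hY : volume Y ≤ ENNReal.ofReal (symD A) := by
    have hYA : Y ⊆ A := inter_subset_left.trans inter_subset_right
    refine (ENNReal.le_ofReal_iff_toReal_le (ne_top_of_le_ne_top hA (measure_mono hYA))
      (symD_nonneg A)).2 (toReal_volume_le_symD hA hYA ?_ ?_)
    · exact (hXm.inter hAm).inter ((hXm.inter hAm).preimage (measurable_const.sub measurable_id))
    · exact isSymmetricSet_of_forall_sub_mem fun x hx => ⟨hx.2, by simpa [ρ] using hx.1⟩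
  have hcover : X ⊆ Y ∪ (X \ A) ∪ ρ ⁻¹' (X \ A) := by
    intro x hx
    by_cases hxA : x ∈ A <;> by_cases hρA : ρ x ∈ A
    · exact Or.inl (Or.inl ⟨⟨hx, hxA⟩, hX x hx, hρA⟩)
    · exact Or.inr ⟨hX x hx, hρA⟩
    all_goals exact Or.inl (Or.inr ⟨hx, hxA⟩)
  have hρ : volume (ρ ⁻¹' (X \ A)) = volume (X \ A) :=
    (Measure.measurePreserving_sub_left volume a).measure_preimage (hXm.diff hAm).nullMeasurableSet
  calc volume X ≤ volume Y + volume (X \ A) + volume (ρ ⁻¹' (X \ A)) :=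
        (measure_mono hcover).trans ((measure_union_le _ _).trans
          (add_le_add_left (measure_union_le _ _) _))
    _ ≤ ENNReal.ofReal (symD A) + 2 * volume (X \ A) := by
        rw [hρ, add_assoc, ← two_mul]
        gcongr

end Symmetric

section GridCell

def gridCell (n : ℕ) (s : ℤ) : Set ℝ := Ico (((s : ℝ) - 1) / n) (s / n)

lemma mem_gridCell_iff {n : ℕ} (hn : 0 < n) {x : ℝ} {s : ℤ} :
    x ∈ gridCell n s ↔ ⌊x * n⌋ = s - 1 := by
  have hn' : (0 : ℝ) < n := Nat.cast_pos.2 hn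
  rw [Int.floor_eq_iff, gridCell, mem_Ico, div_le_iff₀ hn', lt_div_iff₀ hn']
  push_cast
  constructor <;> rintro ⟨h1, h2⟩ <;> constructor <;> linarith

lemma mem_gridCell_add {n : ℕ} {x : ℝ} {s k : ℤ} :
    x ∈ gridCell n (s + k) ↔ x - k / n ∈ gridCell n s := by
  change _ ↔ x ∈ (fun y : ℝ => y - (k : ℝ) / n) ⁻¹' gridCell n s
  rw [gridCell, gridCell, preimage_sub_const_Ico]
  push_cast
  ring_nf

lemma measurableSet_gridCell (n : ℕ) (s : ℤ) : MeasurableSet (gridCell n s) :=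
  measurableSet_Ico

lemma pairwise_disjoint_gridCell (n : ℕ) : Pairwise (Disjoint on gridCell n) := by
  rcases n.eq_zero_or_pos with rfl | hn
  · intro s t _
    simp [onFun, gridCell]
  · intro s t hst
    refine disjoint_left.2 fun x hs ht => hst ?_
    rw [mem_gridCell_iff hn] at hs ht
    omega

lemma volume_gridCell (n : ℕ) (s : ℤ) : volume (gridCell n s) = ENNReal.ofReal (1 / n) := by
  rw [gridCell, Real.volume_Ico]
  ring_nf

lemma volume_biUnion_gridCell (n : ℕ) (S : Finset ℤ) :
    volume (⋃ s ∈ S, gridCell n s) = ENNReal.ofReal (S.card / n) := by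
  rw [measure_biUnion_finset ((pairwise_disjoint_gridCell n).set_pairwise _)
    fun _ _ => measurableSet_gridCell n _]
  simp [volume_gridCell, div_eq_mul_inv]

lemma measurableSet_biUnion_gridCell (n : ℕ) (S : Finset ℤ) :
    MeasurableSet (⋃ s ∈ S, gridCell n s) :=
  .biUnion S.countable_toSet fun _ _ => measurableSet_gridCell n _

lemma biUnion_gridCell_subset_Ico {n : ℕ} {S : Finset ℤ} (hS : S ⊆ Finset.Icc 1 (n : ℤ)) :
    ⋃ s ∈ S, gridCell n s ⊆ Ico 0 1 := by
  refine iUnion₂_subset fun s hs x hx => ?_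
  obtain ⟨h1, hn⟩ := Finset.mem_Icc.1 (hS hs)
  have h1' : (1 : ℝ) ≤ s := by exact_mod_cast h1
  have hn' : (s : ℝ) ≤ n := by exact_mod_cast hn
  exact ⟨(div_nonneg (by linarith) n.cast_nonneg).trans hx.1,
    hx.2.trans_le (div_le_one_of_le₀ hn' n.cast_nonneg)⟩

lemma exists_mem_gridCell {n : ℕ} (hn : 0 < n) {x : ℝ} (hx : x ∈ Ico 0 1) :
    ∃ s ∈ Finset.Icc 1 (n : ℤ), x ∈ gridCell n s := by
  have hlt : ⌊x * n⌋ < n := Int.floor_lt.2 (by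
    push_cast
    nlinarith [hx.2, (Nat.cast_pos.2 hn : (0 : ℝ) < n)])
  have hge : 0 ≤ ⌊x * n⌋ := Int.floor_nonneg.2 (mul_nonneg hx.1 n.cast_nonneg)
  exact ⟨⌊x * n⌋ + 1, Finset.mem_Icc.2 ⟨by omega, by omega⟩, (mem_gridCell_iff hn).2 (by ring)⟩

lemma dist_lt_of_mem_gridCell {n : ℕ} {s : ℤ} {x y : ℝ} (hx : x ∈ gridCell n s)
    (hy : y ∈ gridCell n s) : dist x y < 1 / n := by
  have hlen : (s : ℝ) / n - ((s : ℝ) - 1) / n = 1 / n := by ring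
  rw [Real.dist_eq, abs_sub_lt_iff]
  constructor <;> linarith [hx.1, hx.2, hy.1, hy.2]

end GridCell

section Upper

/-- The two sets differ by a translation by `s / n`. -/
lemma volume_gridCell_inter_preimage_sub (n : ℕ) (a : ℝ) (s t : ℤ) :
    volume (gridCell n s ∩ (fun x => a - x) ⁻¹' gridCell n t) =
      volume (gridCell n 0 ∩ (fun x => a - x) ⁻¹' gridCell n (s + t)) := by
  rw [← measure_preimage_add_right volume (-(s / n : ℝ))
    (gridCell n 0 ∩ (fun x => a - x) ⁻¹' gridCell n (s + t))]
  congr 1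
  ext x
  have h1 := @mem_gridCell_add n x 0 s
  have h2 := @mem_gridCell_add n (a - (x + -(s / n : ℝ))) t s
  rw [zero_add, sub_eq_add_neg] at h1
  rw [add_comm t, show a - (x + -(s / n : ℝ)) - s / n = a - x by ring] at h2
  change x ∈ gridCell n s ∧ a - x ∈ gridCell n t ↔
    x + -(s / n : ℝ) ∈ gridCell n 0 ∧ a - (x + -(s / n : ℝ)) ∈ gridCell n (s + t)
  rw [h1, h2]

lemma IsSymmetricSet.volume_le_of_isBstar {C : Set ℝ} (hCs : IsSymmetricSet C) {g n : ℕ}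
    {S : Finset ℤ} (hS : IsBstar g S) (hC : C ⊆ ⋃ s ∈ S, gridCell n s) :
    volume C ≤ ENNReal.ofReal (g / n) := by
  obtain ⟨c, hc⟩ := hCs
  set P : ℤ → ℤ → Set ℝ := fun s t => gridCell n s ∩ (fun x => 2 * c - x) ⁻¹' gridCell n t
  have hPm : ∀ s t, MeasurableSet (P s t) := fun s t =>
    (measurableSet_gridCell n s).inter
      ((measurableSet_gridCell n t).preimage (measurable_const.sub measurable_id))
  have hP : ∀ s t, volume (P s t) = volume (P 0 (s + t)) :=
    volume_gridCell_inter_preimage_sub n (2 * c)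
  have hcover : C ⊆ ⋃ p ∈ S ×ˢ S, P p.1 p.2 := by
    intro x hx
    obtain ⟨s, hs, hxs⟩ := mem_iUnion₂.1 (hC hx)
    obtain ⟨t, ht, hxt⟩ := mem_iUnion₂.1 (hC ((hc x).1 hx))
    exact mem_iUnion₂.2 ⟨(s, t), Finset.mem_product.2 ⟨hs, ht⟩, hxs, hxt⟩
  set M := (S ×ˢ S).image (fun p => p.1 + p.2)
  have hdisj : (M : Set ℤ).PairwiseDisjoint (P 0) := fun m _ m' _ h =>
    ((pairwise_disjoint_gridCell n h).preimage _).mono inter_subset_right inter_subset_right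
  calc volume C ≤ ∑ p ∈ S ×ˢ S, volume (P p.1 p.2) :=
        (measure_mono hcover).trans (measure_biUnion_finset_le _ _)
    _ = ∑ p ∈ S ×ˢ S, volume (P 0 (p.1 + p.2)) := Finset.sum_congr rfl fun p _ => hP p.1 p.2
    _ = ∑ m ∈ M, ((S ×ˢ S).filter (fun p => p.1 + p.2 = m)).card • volume (P 0 m) :=
        Finset.sum_comp (fun m => volume (P 0 m)) (fun p : ℤ × ℤ => p.1 + p.2)
    _ ≤ ∑ m ∈ M, g • volume (P 0 m) :=
        Finset.sum_le_sum fun m _ => nsmul_le_nsmul_left zero_le (hS m)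
    _ = g • volume (⋃ m ∈ M, P 0 m) := by
        rw [measure_biUnion_finset hdisj fun m _ => hPm 0 m, Finset.smul_sum]
    _ ≤ g • volume (gridCell n 0) := by
        gcongr
        exact iUnion₂_subset fun m _ => inter_subset_left
    _ = ENNReal.ofReal (g / n) := by
        rw [volume_gridCell, ← ENNReal.ofReal_nsmul, nsmul_eq_mul, mul_one_div]

lemma exists_inter_Iic_volume_eq {A : Set ℝ} {a b : ℝ} (hA : A ⊆ Icc a b) {x : ENNReal}
    (hx : x ≤ volume A) : ∃ t, volume (A ∩ Iic t) = x := by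
  have hAfin : volume A ≠ ⊤ := ((measure_mono hA).trans_lt measure_Icc_lt_top).ne
  have hfin : ∀ t, volume (A ∩ Iic t) ≠ ⊤ := fun t =>
    ne_top_of_le_ne_top hAfin (measure_mono inter_subset_left)
  set f : ℝ → ℝ := fun t => (volume (A ∩ Iic t)).toReal
  have hf : LipschitzWith 1 f := LipschitzWith.of_le_add fun t u => by
    have hsub : A ∩ Iic t ⊆ (A ∩ Iic u) ∪ Ioc u t := fun y ⟨hyA, hyt⟩ =>
      (le_or_gt y u).imp (fun h => ⟨hyA, h⟩) (fun h => ⟨h, hyt⟩)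
    have := ENNReal.toReal_le_add ((measure_mono hsub).trans (measure_union_le _ _)) (hfin u)
      measure_Ioc_lt_top.ne
    rw [Real.volume_Ioc, ENNReal.toReal_ofReal'] at this
    have hmax : max (t - u) 0 ≤ dist t u :=
      max_le ((le_abs_self _).trans_eq (Real.dist_eq t u).symm) dist_nonneg
    linarith
  have hfa : f a = 0 := by
    have : A ∩ Iic a ⊆ {a} := fun y hy => le_antisymm hy.2 (hA hy.1).1
    simp [f, measure_mono_null this (measure_singleton a)]
  have hfb : f b = (volume A).toReal := by
    simp only [f, inter_eq_left.2 (hA.trans Icc_subset_Iic_self)]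
  obtain ⟨t, ht⟩ := intermediate_value_univ a b hf.continuous
    ⟨hfa ▸ ENNReal.toReal_nonneg, hfb ▸ ENNReal.toReal_mono hAfin hx⟩
  exact ⟨t, (ENNReal.toReal_eq_toReal_iff' (hfin t) (ne_top_of_le_ne_top hAfin hx)).1 ht⟩

lemma exists_subset_volume_eq_symD_le {ε : ℝ} {g n : ℕ} (hn : 0 < n)
    (hR : (n : ℝ) * ε ≤ R g n) :
    ∃ A ⊆ Ico (0 : ℝ) 1, MeasurableSet A ∧ volume A = ENNReal.ofReal ε ∧ symD A ≤ g / n := by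
  obtain ⟨S, hSn, hSB, hScard⟩ := exists_isBstar_card_eq_R g n
  set A₀ := ⋃ s ∈ S, gridCell n s
  have hA₀ : A₀ ⊆ Ico 0 1 := biUnion_gridCell_subset_Ico hSn
  have hε : ENNReal.ofReal ε ≤ volume A₀ := by
    rw [volume_biUnion_gridCell, hScard]
    exact ENNReal.ofReal_le_ofReal ((le_div_iff₀ (Nat.cast_pos.2 hn)).2 (by linarith))
  obtain ⟨t, ht⟩ := exists_inter_Iic_volume_eq (hA₀.trans Ico_subset_Icc_self) hε
  refine ⟨A₀ ∩ Iic t, inter_subset_left.trans hA₀,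
    (measurableSet_biUnion_gridCell n S).inter measurableSet_Iic, ht,
    symD_le fun C hC _ hCs => ?_⟩
  exact ENNReal.toReal_le_of_le_ofReal (by positivity)
    (hCs.volume_le_of_isBstar hSB (hC.trans inter_subset_left))

end Upper

section Lower

lemma exists_biUnion_gridCell_approx {A : Set ℝ} (hA : A ⊆ Ico 0 1) (hAm : MeasurableSet A)
    {σ : ENNReal} (hσ : σ ≠ 0) :
    ∀ᶠ n : ℕ in atTop, ∃ S ⊆ Finset.Icc 1 (n : ℤ),
      volume (A \ ⋃ s ∈ S, gridCell n s) ≤ σ ∧ volume ((⋃ s ∈ S, gridCell n s) \ A) ≤ σ := by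
  classical
  have hAfin : volume A ≠ ⊤ := ((measure_mono hA).trans_lt measure_Ico_lt_top).ne
  obtain ⟨U, hAU, hU, -, hUA⟩ := hAm.exists_isOpen_sdiff_lt hAfin hσ
  obtain ⟨K, hKA, hK, hAK⟩ := hAm.exists_isCompact_sdiff_lt hAfin hσ
  obtain ⟨δ, hδ, hKU⟩ := hK.exists_thickening_subset_open hU (hKA.trans hAU)
  obtain ⟨N, hN⟩ := exists_nat_one_div_lt hδ
  refine eventually_atTop.2 ⟨N + 1, fun n hn =>
    ⟨(Finset.Icc 1 (n : ℤ)).filter (fun s => gridCell n s ⊆ U), Finset.filter_subset _ _, ?_, ?_⟩⟩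
  · -- once the cells are finer than the distance from `K` to the complement of `U`,
    -- every cell meeting `K` lies in `U`
    have hKF : K ⊆ ⋃ s ∈ (Finset.Icc 1 (n : ℤ)).filter (fun s => gridCell n s ⊆ U),
        gridCell n s := by
      intro y hy
      obtain ⟨s, hs, hys⟩ := exists_mem_gridCell (n := n) (by omega) (hA (hKA hy))
      refine mem_iUnion₂.2 ⟨s, Finset.mem_filter.2 ⟨hs, fun z hz => hKU ?_⟩, hys⟩
      refine Metric.mem_thickening_iff.2 ⟨y, hy, (dist_lt_of_mem_gridCell hz hys).trans_le ?_⟩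
      refine (one_div_le_one_div_of_le (by positivity) ?_).trans hN.le
      exact_mod_cast hn
    exact (measure_mono (sdiff_subset_sdiff_right hKF)).trans hAK.le
  · refine (measure_mono (sdiff_subset_sdiff_left ?_)).trans hUA.le
    exact iUnion₂_subset fun s hs => (Finset.mem_filter.1 hs).2

lemma isBstar_of_volume_sdiff_le {A : Set ℝ} (hA : volume A ≠ ⊤) (hAm : MeasurableSet A)
    {n : ℕ} (hn : 0 < n) {S : Finset ℤ} {σ : ℝ} (hσ : 0 ≤ σ)
    (hSA : volume ((⋃ s ∈ S, gridCell n s) \ A) ≤ ENNReal.ofReal σ) :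
    IsBstar ⌈n * (symD A + 2 * σ)⌉₊ S := by
  intro m
  set P := (S ×ˢ S).filter (fun p => p.1 + p.2 = m)
  set X := ⋃ p ∈ P, Ioo (((p.1 : ℝ) - 1) / n) (p.1 / n)
  have hXm : MeasurableSet X := .biUnion P.countable_toSet fun _ _ => measurableSet_Ioo
  have hXvol : volume X = ENNReal.ofReal (P.card / n) := by
    rw [measure_biUnion_finset ?_ fun _ _ => measurableSet_Ioo]
    · have hcell : ∀ s : ℤ, volume (Ioo (((s : ℝ) - 1) / n) (s / n)) = ENNReal.ofReal (1 / n) :=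
        fun s => by rw [Real.volume_Ioo, ← Real.volume_Ico]; exact volume_gridCell n s
      rw [Finset.sum_congr rfl fun p _ => hcell p.1]
      simp [div_eq_mul_inv]
    · intro p hp q hq hpq
      simp only [Finset.mem_coe, Finset.mem_filter, P] at hp hq
      have : p.1 ≠ q.1 := fun h => hpq (Prod.ext h (by omega))
      exact (pairwise_disjoint_gridCell n this).mono Ioo_subset_Ico_self Ioo_subset_Ico_self
  have hXS : X ⊆ ⋃ s ∈ S, gridCell n s := iUnion₂_subset fun p hp =>
    Ioo_subset_Ico_self.trans (subset_biUnion_of_mem (u := gridCell n)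
      (Finset.mem_product.1 (Finset.mem_filter.1 hp).1).1)
  -- the reflection `x ↦ (m - 1)/n - x` swaps the open cells of `p.1` and `p.2 = m - p.1`
  have hXrefl : ∀ x ∈ X, ((m : ℝ) - 1) / n - x ∈ X := by
    intro x hx
    obtain ⟨p, hp, hxp⟩ := mem_iUnion₂.1 hx
    obtain ⟨⟨hp1, hp2⟩, hpm⟩ := Finset.mem_filter.1 hp |>.imp_left Finset.mem_product.1
    refine mem_iUnion₂.2 ⟨(p.2, p.1), Finset.mem_filter.2 ⟨Finset.mem_product.2 ⟨hp2, hp1⟩,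
      by rw [← hpm]; ring⟩, ?_⟩
    have e1 : ((m : ℝ) - 1) / n - p.1 / n = ((p.2 : ℝ) - 1) / n := by rw [← hpm]; push_cast; ring
    have e2 : ((m : ℝ) - 1) / n - ((p.1 : ℝ) - 1) / n = p.2 / n := by rw [← hpm]; push_cast; ring
    exact ⟨by linarith [hxp.2], by linarith [hxp.1]⟩
  have hbound : ENNReal.ofReal (P.card / n) ≤ ENNReal.ofReal (symD A + 2 * σ) := by
    rw [← hXvol, ENNReal.ofReal_add (symD_nonneg A) (by positivity), ENNReal.ofReal_mul zero_le_two,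
      ENNReal.ofReal_ofNat]
    calc volume X ≤ ENNReal.ofReal (symD A) + 2 * volume (X \ A) :=
          volume_le_symD_add hA hAm hXm hXrefl
      _ ≤ ENNReal.ofReal (symD A) + 2 * ENNReal.ofReal σ := by
          gcongr
          exact (measure_mono (sdiff_subset_sdiff_left hXS)).trans hSA
  have hn' : (0 : ℝ) < n := Nat.cast_pos.2 hn
  have := (ENNReal.ofReal_le_ofReal_iff (by positivity [symD_nonneg A])).1 hbound
  rw [div_le_iff₀' hn'] at this
  exact_mod_cast this.trans (Nat.le_ceil _)

lemma eventually_exists_isBstar_approx {ε : ℝ} {A : Set ℝ} (hA : A ⊆ Ico 0 1)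
    (hAm : MeasurableSet A) (hAv : volume A = ENNReal.ofReal ε) {σ : ℝ} (hσ : 0 < σ) :
    ∀ᶠ n : ℕ in atTop, ∃ S ⊆ Finset.Icc 1 (n : ℤ),
      n * ε ≤ S.card + n * σ ∧ IsBstar ⌈n * (symD A + 2 * σ)⌉₊ S := by
  have hAfin : volume A ≠ ⊤ := ((measure_mono hA).trans_lt measure_Ico_lt_top).ne
  filter_upwards [exists_biUnion_gridCell_approx hA hAm (ENNReal.ofReal_pos.2 hσ).ne',
    eventually_gt_atTop 0] with n ⟨S, hSn, hAS, hSA⟩ hn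
  refine ⟨S, hSn, ?_, isBstar_of_volume_sdiff_le hAfin hAm hn hσ.le hSA⟩
  have hn' : (0 : ℝ) < n := Nat.cast_pos.2 hn
  have : ENNReal.ofReal ε ≤ ENNReal.ofReal (S.card / n + σ) := by
    rw [← hAv, ENNReal.ofReal_add (by positivity) hσ.le, ← volume_biUnion_gridCell]
    exact (measure_le_inter_add_sdiff _ _ _).trans
      (add_le_add (measure_mono inter_subset_right) hAS)
  have := (ENNReal.ofReal_le_ofReal_iff (by positivity)).1 this
  rw [div_add' _ _ _ hn'.ne', le_div_iff₀ hn'] at this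
  linarith

lemma exists_R_ge_div_le_symD_add {ε : ℝ} (h0 : 0 ≤ ε) (h1 : ε ≤ 1) {A : Set ℝ}
    (hA : A ⊆ Ico 0 1) (hAm : MeasurableSet A) (hAv : volume A = ENNReal.ofReal ε)
    {δ : ℝ} (hδ : 0 < δ) :
    ∃ g n : ℕ, 1 ≤ g ∧ g ≤ n ∧ (n : ℝ) * ε ≤ R g n ∧ (g : ℝ) / n ≤ symD A + δ := by
  set σ := δ / 8
  obtain ⟨n, ⟨S, hSn, hScard, hSB⟩, hn0, hnδ⟩ :=
    ((eventually_exists_isBstar_approx hA hAm hAv (by positivity : 0 < σ)).and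
      ((eventually_gt_atTop 0).and (eventually_ge_atTop ⌈6 / δ⌉₊))).exists
  have hn' : (0 : ℝ) < n := Nat.cast_pos.2 hn0
  have hnδ : 6 ≤ n * δ := (div_le_iff₀ hδ).1 (Nat.ceil_le.1 hnδ)
  set k := ⌈n * ε⌉₊
  obtain ⟨T, hTn, hkT, hTB⟩ := exists_isBstar_superset hSn hSB (k := k)
    (Nat.ceil_le.2 (by nlinarith))
  set g := ⌈n * (symD A + 2 * σ)⌉₊ + 2 * (k - S.card)
  have hk : ((k - S.card : ℕ) : ℝ) ≤ n * σ + 1 := by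
    rcases le_total k S.card with h | h
    · rw [Nat.sub_eq_zero_of_le h, Nat.cast_zero]
      positivity
    · rw [Nat.cast_sub h]
      linarith [Nat.ceil_lt_add_one (by positivity : 0 ≤ n * ε)]
  have hg : (g : ℝ) ≤ n * (symD A + δ) := by
    have := Nat.ceil_lt_add_one (by positivity [symD_nonneg A] : 0 ≤ n * (symD A + 2 * σ))
    have e1 : (n : ℝ) * (symD A + 2 * σ) = n * symD A + n * δ / 4 := by ring
    have e2 : (n : ℝ) * σ = n * δ / 8 := by ring
    push_cast [g]
    nlinarith
  have hg1 : 1 ≤ g := by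
    have := Nat.ceil_pos.2 (by positivity [symD_nonneg A] : 0 < n * (symD A + 2 * σ))
    omega
  refine ⟨min g n, n, le_min hg1 hn0, min_le_right _ _, ?_, ?_⟩
  · calc (n : ℝ) * ε ≤ k := Nat.le_ceil _
      _ ≤ T.card := by exact_mod_cast hkT
      _ ≤ R (min g n) n := by exact_mod_cast card_le_R hTn (hTB.min_of_subset_Icc hTn)
  · rw [div_le_iff₀ hn']
    have : ((min g n : ℕ) : ℝ) ≤ g := by exact_mod_cast min_le_left _ _
    linarith

end Lower

theorem delta_as_infimum (ε : ℝ) (h0 : 0 ≤ ε) (h1 : ε ≤ 1) :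
    Delta ε = sInf {d : ℝ | ∃ g n : ℕ, 1 ≤ g ∧ g ≤ n ∧
      (n : ℝ) * ε ≤ (R g n : ℝ) ∧ d = (g : ℝ) / n} := by
  apply le_antisymm
  · refine le_csInf ⟨1, 1, 1, le_rfl, le_rfl, ?_, by norm_num⟩ ?_
    · simpa using h1.trans (by exact_mod_cast le_R_self 1)
    rintro _ ⟨g, n, hg, hgn, hR, rfl⟩
    obtain ⟨A, hA, hAm, hAv, hAD⟩ := exists_subset_volume_eq_symD_le (by omega) hR
    exact csInf_le_of_le ⟨0, by rintro _ ⟨B, -, -, -, rfl⟩; exact symD_nonneg B⟩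
      ⟨A, hA, hAm, hAv, rfl⟩ hAD
  · refine le_csInf ⟨_, Ico 0 ε, Ico_subset_Ico_right h1, measurableSet_Ico, by simp, rfl⟩ ?_
    rintro _ ⟨A, hA, hAm, hAv, rfl⟩
    refine le_of_forall_pos_le_add fun δ hδ => ?_
    obtain ⟨g, n, hg, hgn, hR, hle⟩ := exists_R_ge_div_le_symD_add h0 h1 hA hAm hAv hδ
    exact csInf_le_of_le ⟨0, by rintro _ ⟨g, n, -, -, -, rfl⟩; positivity⟩
      ⟨g, n, hg, hgn, hR, rfl⟩ hle
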